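/- arXiv:0910.3299 — 7 statements merged into one kernel-verified Lean document; each statement's English description precedes it below -/
import Mathlib

section
/- Let X be a compact metric space and let A be a unital simple C*-algebra. For every closed two-sided ideal I of the C*-algebra C(X,A), setting X_I = {x ∈ X : f(x) = 0 for all f ∈ I} (a closed subset of X), one has I = {f ∈ C(X,A) : f(x) = 0 for all x ∈ X_I}. Consequently, the closed two-sided ideals of C(X,A) are exactly the sets {f ∈ C(X,A) : f(x) = 0 for all x ∈ Y} for closed subsets Y ⊆ X. -/
/-!
For each point `x`, the values `{g x | g ∈ I}` form a two-sided ideal of `A` (multiply by constant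
functions), whose closure is `0` or `A` by simplicity; it is `A` exactly when `x` lies outside the
common zero set of `I`. So a function `f` vanishing on that zero set can be approximated near every
point by elements of `I`, and a partition of unity `ρᵢ` glues finitely many local approximants
`gᵢ ∈ I` into the global approximant `∑ ρᵢ • gᵢ ∈ I`. Hence `f` lies in the closure of `I`.
-/

open Set

namespace TwoSidedIdeal

variable {R : Type*} [Ring R] [TopologicalSpace R] [IsTopologicalRing R]

protected def closure (I : TwoSidedIdeal R) : TwoSidedIdeal R :=
  .mk' (_root_.closure (I : Set R)) (subset_closure I.zero_mem)
    (fun ha hb => map_mem_closure₂ continuous_add ha hb fun _ ha _ hb => I.add_mem ha hb)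
    (fun ha => map_mem_closure continuous_neg ha fun _ ha => I.neg_mem ha)
    (fun hb => map_mem_closure (continuous_const_mul _) hb fun _ hb => I.mul_mem_left _ _ hb)
    (fun {_ b} ha => map_mem_closure (f := (· * b)) (continuous_mul_const _) ha
      fun _ ha => I.mul_mem_right _ _ ha)

@[simp]
theorem coe_closure (I : TwoSidedIdeal R) : (I.closure : Set R) = _root_.closure (I : Set R) :=
  coe_mk' _ _ _ _ _ _

theorem isClosed_closure (I : TwoSidedIdeal R) : IsClosed (I.closure : Set R) := by
  simp

end TwoSidedIdeal

namespace ContinuousMap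

variable {X : Type*} [TopologicalSpace X]

section Ring

variable {A : Type*} [Ring A] [TopologicalSpace A] [IsTopologicalRing A]

def evalTwoSidedIdeal (I : TwoSidedIdeal C(X, A)) (x : X) : TwoSidedIdeal A :=
  .mk' ((fun g : C(X, A) => g x) '' I) ⟨0, I.zero_mem, rfl⟩
    (fun {_ _} ⟨f, hf, hfx⟩ ⟨g, hg, hgx⟩ => ⟨f + g, I.add_mem hf hg, hfx ▸ hgx ▸ rfl⟩)
    (fun {_} ⟨f, hf, hfx⟩ => ⟨-f, I.neg_mem hf, hfx ▸ rfl⟩)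
    (fun {a _} ⟨f, hf, hfx⟩ => ⟨const X a * f, I.mul_mem_left _ _ hf, hfx ▸ rfl⟩)
    (fun {_ b} ⟨f, hf, hfx⟩ => ⟨f * const X b, I.mul_mem_right _ _ hf, hfx ▸ rfl⟩)

theorem mem_evalTwoSidedIdeal {I : TwoSidedIdeal C(X, A)} {x : X} {a : A} :
    a ∈ evalTwoSidedIdeal I x ↔ ∃ f ∈ I, f x = a :=
  TwoSidedIdeal.mem_mk' _ _ _ _ _ _ _

variable (A) in
def vanishingTwoSidedIdeal (Y : Set X) : TwoSidedIdeal C(X, A) :=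
  .mk' {f | ∀ x ∈ Y, f x = 0} (fun _ _ => rfl)
    (fun hf hg x hx => by simp [hf x hx, hg x hx])
    (fun hf x hx => by simp [hf x hx])
    (fun hf x hx => by simp [hf x hx])
    (fun hf x hx => by simp [hf x hx])

theorem coe_vanishingTwoSidedIdeal (Y : Set X) :
    (vanishingTwoSidedIdeal A Y : Set C(X, A)) = {f | ∀ x ∈ Y, f x = 0} :=
  TwoSidedIdeal.coe_mk' _ _ _ _ _ _

variable [T1Space A]

theorem isClosed_vanishingTwoSidedIdeal (Y : Set X) :
    IsClosed (vanishingTwoSidedIdeal A Y : Set C(X, A)) := by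
  have : {f : C(X, A) | ∀ x ∈ Y, f x = 0} = ⋂ x ∈ Y, (fun f : C(X, A) => f x) ⁻¹' {0} := by
    ext; simp
  rw [coe_vanishingTwoSidedIdeal, this]
  exact isClosed_biInter fun x _ => isClosed_singleton.preimage (continuous_eval_const x)

theorem isClosed_setOf_forall_mem_apply_eq_zero (I : TwoSidedIdeal C(X, A)) :
    IsClosed {x : X | ∀ f ∈ I, f x = 0} := by
  have : {x : X | ∀ f ∈ I, f x = 0} = ⋂ f ∈ (I : Set C(X, A)), f ⁻¹' {0} := by
    ext; simp
  rw [this]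
  exact isClosed_biInter fun f _ => isClosed_singleton.preimage f.continuous

end Ring

theorem smul_mem_twoSidedIdeal {R A : Type*} [CommSemiring R] [TopologicalSpace R] [Ring A] [TopologicalSpace A] [IsTopologicalRing A] [Algebra R A]
    [ContinuousSMul R A] (I : TwoSidedIdeal C(X, A)) (φ : C(X, R)) {g : C(X, A)} (hg : g ∈ I) :
    φ • g ∈ I := by
  have : φ • g = (φ • (1 : C(X, A))) * g := by ext x; simp
  exact this ▸ I.mul_mem_left _ _ hg

variable [CompactSpace X] [T2Space X] {A : Type*} [NormedRing A] [NormedAlgebra ℝ A]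

theorem mem_closure_of_forall_apply_mem_closure (I : TwoSidedIdeal C(X, A)) {f : C(X, A)}
    (hf : ∀ x, f x ∈ closure (evalTwoSidedIdeal I x : Set A)) :
    f ∈ closure (I : Set C(X, A)) := by
  refine Metric.mem_closure_iff.2 fun ε hε => ?_
  have hε2 : 0 < ε / 2 := half_pos hε
  have hloc : ∀ x, ∃ g ∈ I, dist (f x) (g x) < ε / 2 := fun x => by
    obtain ⟨a, ha, hfa⟩ := Metric.mem_closure_iff.1 (hf x) _ hε2
    obtain ⟨g, hg, rfl⟩ := mem_evalTwoSidedIdeal.1 ha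
    exact ⟨g, hg, hfa⟩
  choose g hgI hg using hloc
  set U : X → Set X := fun x => {z | dist (f z) (g x z) < ε / 2}
  have hUo : ∀ x, IsOpen (U x) := fun x => isOpen_lt (by fun_prop) continuous_const
  obtain ⟨t, ht⟩ := isCompact_univ.elim_finite_subcover U hUo
    fun x _ => mem_iUnion.2 ⟨x, hg x⟩
  obtain ⟨ρ, hρ⟩ := PartitionOfUnity.exists_isSubordinate isClosed_univ (fun i : t => U i)
    (fun i => hUo i) (by simpa [iUnion_subtype] using ht)
  refine ⟨∑ i : t, ρ i • g i, sum_mem fun i _ => smul_mem_twoSidedIdeal I _ (hgI i), ?_⟩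
  rw [dist_eq_norm]
  refine lt_of_le_of_lt ((norm_le _ hε2.le).2 fun z => ?_) (half_lt_self hε)
  have hmem : ∑ᶠ i, ρ i z • g i z ∈ Metric.closedBall (f z) (ε / 2) :=
    (convex_closedBall _ _).finsum_mem (fun i => ρ.nonneg i z) (ρ.sum_eq_one (mem_univ z))
      fun i hi => Metric.mem_closedBall'.2 (hρ i (subset_tsupport _ hi)).le
  simpa [finsum_eq_sum_of_fintype, dist_eq_norm, norm_sub_rev] using hmem

theorem mem_of_forall_apply_eq_zero_of_isSimple
    (hA : ∀ J : TwoSidedIdeal A, IsClosed (J : Set A) → J = ⊥ ∨ J = ⊤)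
    {I : TwoSidedIdeal C(X, A)} (hI : IsClosed (I : Set C(X, A))) {f : C(X, A)}
    (hf : ∀ x, (∀ g ∈ I, g x = 0) → f x = 0) : f ∈ I := by
  refine hI.closure_subset (mem_closure_of_forall_apply_mem_closure I fun x => ?_)
  by_cases hx : ∀ g ∈ I, g x = 0
  · rw [hf x hx]
    exact subset_closure (evalTwoSidedIdeal I x).zero_mem
  obtain ⟨g, hgI, hgx⟩ := not_forall₂.1 hx
  have hgx_mem : g x ∈ closure (evalTwoSidedIdeal I x : Set A) :=
    subset_closure (mem_evalTwoSidedIdeal.2 ⟨g, hgI, rfl⟩)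
  rw [← TwoSidedIdeal.coe_closure] at hgx_mem ⊢
  rcases hA _ (evalTwoSidedIdeal I x).isClosed_closure with hbot | htop
  · rw [hbot, SetLike.mem_coe, TwoSidedIdeal.mem_bot] at hgx_mem
    exact absurd hgx_mem hgx
  · rw [htop]
    exact TwoSidedIdeal.mem_top _

end ContinuousMap

theorem ideals_of_continuous_functions_general
    (X : Type*) [MetricSpace X] [CompactSpace X]
    (A : Type*) [NormedRing A] [NormedAlgebra ℂ A]
    (hA : ∀ I : TwoSidedIdeal A, IsClosed (I : Set A) → I = ⊥ ∨ I = ⊤) :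
    (∀ I : TwoSidedIdeal C(X, A), IsClosed (I : Set C(X, A)) →
      IsClosed {x : X | ∀ f ∈ I, f x = 0} ∧
      (I : Set C(X, A)) =
        {f : C(X, A) | ∀ x : X, (∀ g ∈ I, g x = 0) → f x = 0}) ∧
    (∀ I : TwoSidedIdeal C(X, A), IsClosed (I : Set C(X, A)) →
      ∃ Y : Set X, IsClosed Y ∧
        (I : Set C(X, A)) = {f : C(X, A) | ∀ x ∈ Y, f x = 0}) ∧
    (∀ Y : Set X, IsClosed Y →
      ∃ I : TwoSidedIdeal C(X, A), IsClosed (I : Set C(X, A)) ∧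
        (I : Set C(X, A)) = {f : C(X, A) | ∀ x ∈ Y, f x = 0}) := by
  have hcoe : ∀ I : TwoSidedIdeal C(X, A), IsClosed (I : Set C(X, A)) →
      (I : Set C(X, A)) = {f : C(X, A) | ∀ x : X, (∀ g ∈ I, g x = 0) → f x = 0} :=
    fun I hI => Set.Subset.antisymm (fun f hf _ hx => hx f hf)
      fun _ hf => ContinuousMap.mem_of_forall_apply_eq_zero_of_isSimple hA hI hf
  refine ⟨fun I hI => ⟨ContinuousMap.isClosed_setOf_forall_mem_apply_eq_zero I, hcoe I hI⟩,
    fun I hI => ⟨_, ContinuousMap.isClosed_setOf_forall_mem_apply_eq_zero I, hcoe I hI⟩,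
    fun Y _ => ⟨ContinuousMap.vanishingTwoSidedIdeal A Y,
      ContinuousMap.isClosed_vanishingTwoSidedIdeal Y, ContinuousMap.coe_vanishingTwoSidedIdeal Y⟩⟩

/-- Let `X` be a compact metric space and `A` a unital simple C*-algebra.
For every closed two-sided ideal `I` of `C(X,A)`, setting
`X_I = {x ∈ X : f x = 0 for all f ∈ I}` (a closed subset of `X`), one has
`I = {f ∈ C(X,A) : f x = 0 for all x ∈ X_I}`.  Consequently, the closed two-sided
ideals of `C(X,A)` are exactly the sets `{f : ∀ x ∈ Y, f x = 0}` for closed `Y ⊆ X`. -/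
theorem ideals_of_continuous_functions
    (X : Type*) [MetricSpace X] [CompactSpace X]
    (A : Type*) [NormedRing A] [StarRing A] [CStarRing A] [NormedAlgebra ℂ A]
    [CompleteSpace A] [StarModule ℂ A] [Nontrivial A]
    (hA : ∀ I : TwoSidedIdeal A, IsClosed (I : Set A) → I = ⊥ ∨ I = ⊤) :
    (∀ I : TwoSidedIdeal C(X, A), IsClosed (I : Set C(X, A)) →
      IsClosed {x : X | ∀ f ∈ I, f x = 0} ∧
      (I : Set C(X, A)) =
        {f : C(X, A) | ∀ x : X, (∀ g ∈ I, g x = 0) → f x = 0}) ∧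
    (∀ I : TwoSidedIdeal C(X, A), IsClosed (I : Set C(X, A)) →
      ∃ Y : Set X, IsClosed Y ∧
        (I : Set C(X, A)) = {f : C(X, A) | ∀ x ∈ Y, f x = 0}) ∧
    (∀ Y : Set X, IsClosed Y →
      ∃ I : TwoSidedIdeal C(X, A), IsClosed (I : Set C(X, A)) ∧
        (I : Set C(X, A)) = {f : C(X, A) | ∀ x ∈ Y, f x = 0}) :=
  ideals_of_continuous_functions_general X A hA
end

section
/- Let X be a compact metric space, let A be a unital simple C*-algebra, and let α be a *-automorphism of C(X,A). Then there exists a homeomorphism σ : X → X such that α(I_x) = I_{σ(x)} for every x ∈ X, where I_x = {f ∈ C(X,A) : f(x) = 0}; equivalently, for every x ∈ X and f ∈ C(X,A), f(x) = 0 if and only if α(f)(σ(x)) = 0. -/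
/-!
A unital simple complex Banach algebra has trivial centre: for central `z` and `μ` in its
spectrum, the closure of the ideal generated by `μ - z` is a proper closed ideal, hence zero.
Consequently the centre of `C(X, A)` is `C(X, ℂ) · 1`, so `α` restricts to an automorphism of
`C(X, ℂ)`, which by Gelfand duality is composition with a homeomorphism `σ⁻¹`. Finally, every
`f` vanishing at `x` factors as `f = √‖f‖ · g` with `g` continuous, so
`α f = α (√‖f‖) · α g` vanishes at `σ x`.
-/

theorem isUnit_or_eq_zero_of_mem_center {R : Type*} [NormedRing R] [CompleteSpace R]
    (hR : ∀ I : TwoSidedIdeal R, IsClosed (I : Set R) → I = ⊥ ∨ I = ⊤)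
    {c : R} (hc : c ∈ Set.center R) : IsUnit c ∨ c = 0 := by
  rw [Semigroup.mem_center_iff] at hc
  by_cases hunit : IsUnit c
  · exact .inl hunit
  let J : Ideal R := Ideal.span {c}
  have hJ : J ≠ ⊤ := by
    intro h
    obtain ⟨a, ha⟩ := Ideal.mem_span_singleton'.mp (h ▸ Submodule.mem_top : (1 : R) ∈ J)
    exact hunit (Commute.isUnit_mul_iff (hc a) |>.mp (ha ▸ isUnit_one)).2
  let I : TwoSidedIdeal R := .mk' (J.closure : Set R) J.closure.zero_mem J.closure.add_mem
    J.closure.neg_mem (fun {x _} hy ↦ J.closure.mul_mem_left x hy) fun {_ y} hx ↦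
      map_mem_closure (f := (· * y)) (continuous_mul_const y) hx fun z hz ↦ by
        obtain ⟨a, rfl⟩ := Ideal.mem_span_singleton'.mp hz
        exact Ideal.mem_span_singleton'.mpr ⟨a * y, by simp only [mul_assoc, hc y]⟩
  have hI : (I : Set R) = closure J := TwoSidedIdeal.coe_mk' ..
  rcases hR I (hI ▸ isClosed_closure) with h | h
  · exact .inr <| (TwoSidedIdeal.mem_bot R).mp <| h ▸
      (SetLike.mem_coe.mp (hI ▸ subset_closure (Ideal.mem_span_singleton_self c)))
  · refine absurd (J.closure.eq_top_iff_one.mpr ?_) (J.closure_ne_top hJ)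
    have : (1 : R) ∈ (I : Set R) := h ▸ TwoSidedIdeal.mem_top R
    rwa [hI] at this

theorem center_eq_range_algebraMap {A : Type*} [NormedRing A] [NormedAlgebra ℂ A]
    [CompleteSpace A] [Nontrivial A]
    (hA : ∀ I : TwoSidedIdeal A, IsClosed (I : Set A) → I = ⊥ ∨ I = ⊤) :
    Set.center A = Set.range (algebraMap ℂ A) := by
  refine subset_antisymm (fun z hz ↦ ?_) (Set.range_subset_iff.mpr Set.algebraMap_mem_center)
  obtain ⟨μ, hμ⟩ := spectrum.nonempty z
  have hcenter : algebraMap ℂ A μ - z ∈ Set.center A :=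
    sub_mem (Subalgebra.algebraMap_mem (Subalgebra.center ℂ A) μ) hz
  rcases isUnit_or_eq_zero_of_mem_center hA hcenter with h | h
  · exact absurd h (spectrum.mem_iff.mp hμ)
  · exact ⟨μ, sub_eq_zero.mp h⟩

theorem Continuous.inv_sqrt_norm_smul {X E : Type*} [TopologicalSpace X]
    [NormedAddCommGroup E] [NormedSpace ℝ E] {f : X → E} (hf : Continuous f) :
    Continuous fun y ↦ (√‖f y‖)⁻¹ • f y := by
  refine continuous_iff_continuousAt.mpr fun y ↦ ?_
  by_cases hy : f y = 0
  · have hnorm (z : X) : ‖(√‖f z‖)⁻¹ • f z‖ = √‖f z‖ := by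
      rw [norm_smul, norm_inv, Real.norm_of_nonneg (Real.sqrt_nonneg _), ← div_eq_inv_mul,
        Real.div_sqrt]
    rw [ContinuousAt, hy, smul_zero, tendsto_zero_iff_norm_tendsto_zero]
    simpa [hnorm, hy] using hf.norm.sqrt.tendsto y
  · have : √‖f y‖ ≠ 0 := by positivity
    exact (hf.norm.sqrt.continuousAt.inv₀ this).smul hf.continuousAt

namespace ContinuousMap

variable (X A : Type*) [TopologicalSpace X] [NormedRing A] [StarRing A] [NormedAlgebra ℂ A]
  [StarModule ℂ A] [ContinuousStar A]

noncomputable def ofScalar : C(X, ℂ) →⋆ₐ[ℂ] C(X, A) :=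
  compStarAlgHom X (StarAlgHom.ofId ℂ A) (continuous_algebraMap ℂ A)

variable {X A}

@[simp]
theorem ofScalar_apply (h : C(X, ℂ)) (y : X) : ofScalar X A h y = algebraMap ℂ A (h y) := rfl

theorem ofScalar_injective [Nontrivial A] : Function.Injective (ofScalar X A) :=
  fun _ _ hh ↦ ext fun y ↦ (algebraMap ℂ A).injective congr($hh y)

theorem exists_ofScalar_mul_eq (f : C(X, A)) :
    ∃ h : C(X, ℂ), ∃ g : C(X, A), ofScalar X A h * g = f ∧ ∀ x, f x = 0 → h x = 0 := by
  refine ⟨⟨fun y ↦ (√‖f y‖ : ℂ), by fun_prop⟩,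
    ⟨_, f.continuous.inv_sqrt_norm_smul⟩, ext fun y ↦ ?_, fun x hx ↦ by simp [hx]⟩
  by_cases hy : f y = 0
  · simp [hy]
  · have : √‖f y‖ ≠ 0 := by positivity
    simp [← Algebra.smul_def, Complex.coe_smul, inv_smul_smul₀ this]

theorem apply_eq_zero_of_apply_ofScalar {Y F : Type*} [TopologicalSpace Y]
    [FunLike F C(X, A) C(Y, A)] [MulHomClass F C(X, A) C(Y, A)] (γ : F) {x : X} {y : Y}
    (hγ : ∀ h, γ (ofScalar X A h) y = algebraMap ℂ A (h x)) {f : C(X, A)} (hf : f x = 0) :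
    γ f y = 0 := by
  obtain ⟨h, g, rfl, hh⟩ := exists_ofScalar_mul_eq f
  rw [map_mul, mul_apply, hγ, hh x hf, map_zero, zero_mul]

theorem range_ofScalar [CompleteSpace A] [Nontrivial A]
    (hA : ∀ I : TwoSidedIdeal A, IsClosed (I : Set A) → I = ⊥ ∨ I = ⊤) :
    Set.range (ofScalar X A) = Set.center C(X, A) := by
  refine subset_antisymm (Set.range_subset_iff.mpr fun h ↦ ?_) fun f hf ↦ ?_
  · exact Semigroup.mem_center_iff.mpr fun g ↦ ext fun y ↦ by simp [Algebra.commutes]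
  have hscalar (y : X) : f y ∈ Set.range (algebraMap ℂ A) := by
    refine center_eq_range_algebraMap hA ▸ Semigroup.mem_center_iff.mpr fun a ↦ ?_
    simpa using congr($(Semigroup.mem_center_iff.mp hf (const X a)) y)
  choose c hc using hscalar
  have hc_cont : Continuous c := by
    refine (isClosedEmbedding_smul_left (one_ne_zero (α := A))).isEmbedding.continuous_iff.mpr ?_
    simpa [Function.comp_def, ← Algebra.algebraMap_eq_smul_one, hc] using f.continuous
  exact ⟨⟨c, hc_cont⟩, ext hc⟩

end ContinuousMap

theorem StarAlgEquiv.exists_apply_eq_of_preserves_range {R B C : Type*} [CommSemiring R]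
    [StarRing R] [Semiring B] [Algebra R B] [StarRing B] [Semiring C] [Algebra R C] [StarRing C]
    [StarModule R C] (ι : B →⋆ₐ[R] C) (hι : Function.Injective ι) (γ : C ≃⋆ₐ[R] C)
    (hγ : ∀ c, γ c ∈ Set.range ι ↔ c ∈ Set.range ι) :
    ∃ β : B ≃⋆ₐ[R] B, ∀ b, ι (β b) = γ (ι b) := by
  let β : B →⋆ₐ[R] B := (StarAlgEquiv.ofInjective ι hι).symm.toStarAlgHom.comp
    ((γ.toStarAlgHom.comp ι).codRestrict ι.range fun b ↦ (hγ _).mpr ⟨b, rfl⟩)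
  have hβ (b : B) : ι (β b) = γ (ι b) :=
    congrArg Subtype.val ((StarAlgEquiv.ofInjective ι hι).apply_symm_apply _)
  refine ⟨.ofBijective β ⟨fun b b' h ↦ hι (γ.injective ?_), fun b ↦ ?_⟩, hβ⟩
  · exact (hβ b).symm.trans ((congrArg ι h).trans (hβ b'))
  · have : γ (γ.symm (ι b)) ∈ Set.range ι := by rw [γ.apply_symm_apply]; exact ⟨b, rfl⟩
    obtain ⟨b', hb'⟩ := (hγ _).mp this
    exact ⟨b', hι (by rw [hβ, hb', γ.apply_symm_apply])⟩

namespace StarAlgEquiv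

open WeakDual.CharacterSpace

variable {X Y : Type*} [TopologicalSpace X] [CompactSpace X] [T2Space X]
  [TopologicalSpace Y] [CompactSpace Y] [T2Space Y]

noncomputable def dualHomeomorph (φ : C(X, ℂ) ≃⋆ₐ[ℂ] C(Y, ℂ)) : Y ≃ₜ X where
  toFun y := (homeoEval X ℂ).symm (compContinuousMap φ.toStarAlgHom (homeoEval Y ℂ y))
  invFun x := (homeoEval Y ℂ).symm (compContinuousMap φ.symm.toStarAlgHom (homeoEval X ℂ x))
  left_inv y := (homeoEval Y ℂ).injective <| by ext h; simp
  right_inv x := (homeoEval X ℂ).injective <| by ext h; simp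
  continuous_toFun := by fun_prop
  continuous_invFun := by fun_prop

theorem apply_dualHomeomorph (φ : C(X, ℂ) ≃⋆ₐ[ℂ] C(Y, ℂ)) (h : C(X, ℂ)) (y : Y) :
    h (φ.dualHomeomorph y) = φ h y :=
  congr($((homeoEval X ℂ).apply_symm_apply
    (compContinuousMap φ.toStarAlgHom (homeoEval Y ℂ y))) h)

end StarAlgEquiv

open ContinuousMap in
/-- Let `X` be a compact metric space, `A` a unital simple C*-algebra and
`α` a *-automorphism of `C(X,A)`.  Then there exists a homeomorphism `σ : X → X` such
that `α(I_x) = I_{σ(x)}` for every `x ∈ X`; equivalently, for every `x ∈ X` and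
`f ∈ C(X,A)`, `f x = 0` iff `α f (σ x) = 0`. -/
theorem automorphism_induces_homeomorphism
    (X : Type*) [MetricSpace X] [CompactSpace X]
    (A : Type*) [NormedRing A] [StarRing A] [CStarRing A] [NormedAlgebra ℂ A]
    [CompleteSpace A] [StarModule ℂ A] [Nontrivial A]
    (hA : ∀ I : TwoSidedIdeal A, IsClosed (I : Set A) → I = ⊥ ∨ I = ⊤)
    (α : C(X, A) ≃⋆ₐ[ℂ] C(X, A)) :
    ∃ σ : X ≃ₜ X, ∀ (x : X) (f : C(X, A)), f x = 0 ↔ α f (σ x) = 0 := by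
  obtain ⟨β, hβ⟩ := α.exists_apply_eq_of_preserves_range (ofScalar X A) ofScalar_injective
    fun f ↦ by rw [range_ofScalar hA]; exact MulEquivClass.apply_mem_center_iff α
  have hβ_symm (h : C(X, ℂ)) : α.symm (ofScalar X A h) = ofScalar X A (β.symm h) := by
    rw [α.symm_apply_eq, ← hβ, β.apply_symm_apply]
  let σ := β.symm.dualHomeomorph
  refine ⟨σ, fun x f ↦ ⟨apply_eq_zero_of_apply_ofScalar α fun h ↦ ?_, fun hf ↦ ?_⟩⟩
  · rw [← hβ, ofScalar_apply, StarAlgEquiv.apply_dualHomeomorph, β.symm_apply_apply]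
  · simpa using apply_eq_zero_of_apply_ofScalar α.symm (x := σ x) (y := x) (fun h ↦ by
      rw [hβ_symm, ofScalar_apply, StarAlgEquiv.apply_dualHomeomorph]) hf
end

section
/- Let X be a compact metric space, let A be a unital simple C*-algebra, let α be a *-automorphism of C(X,A), and let σ : X → X be a homeomorphism with α(I_x) = I_{σ(x)} for all x ∈ X. For each x ∈ X define β_x : A → A by β_x(a) = α(â)(σ(x)), where â ∈ C(X,A) is the constant function with value a. Then: (i) each β_x is a *-automorphism of A; (ii) α(f)(y) = β_{σ^{-1}(y)}(f(σ^{-1}(y))) for every f ∈ C(X,A) and y ∈ X; (iii) for each a ∈ A the map x ↦ β_x(a) is continuous from X to A. -/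
/-!
If an automorphism `α` of `C(X, A)` carries the ideal `I_x` into `I_{σ x}`, then `α f (σ x)`
depends only on `f x`: `α` kills `const (f x) - f`, which lies in `I_x`. Hence
`β_x a = α (const a) (σ x)` satisfies `α f (σ x) = β_x (f x)`, and the same argument applied to
`α⁻¹` shows that `b ↦ α⁻¹ (const b) x` inverts `β_x`.
-/

namespace ContinuousMap

section Semiring

variable {R X Y A : Type*} [CommSemiring R] [TopologicalSpace X] [TopologicalSpace Y]
  [Semiring A] [TopologicalSpace A] [IsTopologicalSemiring A] [Algebra R A]
  [Star A] [ContinuousStar A]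

def fiberMap (φ : C(X, A) →⋆ₐ[R] C(Y, A)) (y : Y) : A →⋆ₐ[R] A where
  toFun a := φ (const X a) y
  map_one' := congr($(map_one φ) y)
  map_mul' a b := congr($(map_mul φ (const X a) (const X b)) y)
  map_zero' := congr($(map_zero φ) y)
  map_add' a b := congr($(map_add φ (const X a) (const X b)) y)
  commutes' r := congr($(φ.commutes r) y)
  map_star' a := congr($(map_star φ (const X a)) y)

@[simp]
theorem fiberMap_apply (φ : C(X, A) →⋆ₐ[R] C(Y, A)) (y : Y) (a : A) :
    fiberMap φ y a = φ (const X a) y := rfl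

end Semiring

section Ring

variable {R X Y A : Type*} [CommSemiring R] [TopologicalSpace X] [TopologicalSpace Y]
  [Ring A] [TopologicalSpace A] [IsTopologicalRing A] [Algebra R A]
  [Star A] [ContinuousStar A]

theorem fiberMap_apply_eval (φ : C(X, A) →⋆ₐ[R] C(Y, A)) {x : X} {y : Y}
    (h : ∀ f : C(X, A), f x = 0 → φ f y = 0) (f : C(X, A)) :
    fiberMap φ y (f x) = φ f y := by
  have : φ (const X (f x) - f) y = 0 := h _ (sub_self (f x))
  rwa [map_sub, sub_apply, sub_eq_zero] at this

def fiberEquiv (α : C(X, A) ≃⋆ₐ[R] C(Y, A)) (σ : X → Y)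
    (hσ : ∀ x (f : C(X, A)), f x = 0 ↔ α f (σ x) = 0) (x : X) : A ≃⋆ₐ[R] A :=
  StarAlgEquiv.ofStarAlgHom (fiberMap α.toStarAlgHom (σ x)) (fiberMap α.symm.toStarAlgHom x)
    (StarAlgHom.ext fun a ↦ by
      simpa using fiberMap_apply_eval α.symm.toStarAlgHom
        (fun g hg ↦ (hσ x (α.symm g)).mpr (by simpa using hg)) (α.toStarAlgHom (const X a)))
    (StarAlgHom.ext fun b ↦ by
      simpa using fiberMap_apply_eval α.toStarAlgHom
        (fun f hf ↦ (hσ x f).mp hf) (α.symm.toStarAlgHom (const Y b)))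

theorem apply_eq_fiberEquiv_apply (α : C(X, A) ≃⋆ₐ[R] C(Y, A)) (σ : X → Y)
    (hσ : ∀ x (f : C(X, A)), f x = 0 ↔ α f (σ x) = 0) (f : C(X, A)) (x : X) :
    α f (σ x) = fiberEquiv α σ hσ x (f x) :=
  (fiberMap_apply_eval α.toStarAlgHom (fun g hg ↦ (hσ x g).mp hg) f).symm

end Ring

end ContinuousMap

theorem fiber_automorphisms_general
    (X : Type*) [MetricSpace X]
    (A : Type*) [NormedRing A] [StarRing A] [CStarRing A] [NormedAlgebra ℂ A]
    (α : C(X, A) ≃⋆ₐ[ℂ] C(X, A)) (σ : X ≃ₜ X)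
    (hσ : ∀ (x : X) (f : C(X, A)), f x = 0 ↔ α f (σ x) = 0) :
    ∃ β : X → (A ≃⋆ₐ[ℂ] A),
      (∀ (x : X) (a : A), β x a = α (ContinuousMap.const X a) (σ x)) ∧
      (∀ (f : C(X, A)) (y : X), α f y = β (σ.symm y) (f (σ.symm y))) ∧
      (∀ a : A, Continuous fun x : X => β x a) := by
  refine ⟨ContinuousMap.fiberEquiv α σ hσ, fun x a ↦ rfl, fun f y ↦ ?_,
    fun a ↦ (α (ContinuousMap.const X a)).continuous.comp σ.continuous⟩
  simpa using ContinuousMap.apply_eq_fiberEquiv_apply α σ hσ f (σ.symm y)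

/-- Let `X` be a compact metric space, `A` a unital simple C*-algebra,
`α` a *-automorphism of `C(X,A)`, and `σ : X → X` a homeomorphism with
`α(I_x) = I_{σ(x)}` for all `x`.  For each `x` define `β_x : A → A` by
`β_x a = α (const a) (σ x)`.  Then (i) each `β_x` is a *-automorphism of `A`,
(ii) `α f y = β_{σ⁻¹ y} (f (σ⁻¹ y))` for all `f` and `y`, and (iii) for each `a ∈ A`
the map `x ↦ β_x a` is continuous. -/
theorem fiber_automorphisms
    (X : Type*) [MetricSpace X] [CompactSpace X]
    (A : Type*) [NormedRing A] [StarRing A] [CStarRing A] [NormedAlgebra ℂ A]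
    [CompleteSpace A] [StarModule ℂ A] [Nontrivial A]
    (hA : ∀ I : TwoSidedIdeal A, IsClosed (I : Set A) → I = ⊥ ∨ I = ⊤)
    (α : C(X, A) ≃⋆ₐ[ℂ] C(X, A)) (σ : X ≃ₜ X)
    (hσ : ∀ (x : X) (f : C(X, A)), f x = 0 ↔ α f (σ x) = 0) :
    ∃ β : X → (A ≃⋆ₐ[ℂ] A),
      (∀ (x : X) (a : A), β x a = α (ContinuousMap.const X a) (σ x)) ∧
      (∀ (f : C(X, A)) (y : X), α f y = β (σ.symm y) (f (σ.symm y))) ∧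
      (∀ a : A, Continuous fun x : X => β x a) :=
  fiber_automorphisms_general X A α σ hσ
end

section
/- Let X be a compact metric space, let σ : X → X be a minimal homeomorphism, let Y ⊆ X be a nonempty clopen subset, and let n(0) < n(1) < ... < n(l) be the distinct values taken by the first return time λ_Y on Y. Set Y_k = {x ∈ Y : λ_Y(x) = n(k)}. Then the sets σ^{n(k)}(Y_k), for 0 ≤ k ≤ l, are pairwise disjoint and their union is Y. -/
/-!
Minimality makes every point of `X` a forward image `σ^m x` with `m ≥ 1` and `x ∈ Y`: the points
that are not form a closed set `K` with `σ⁻¹ K ⊆ K`, and such a set is `∅` or `X`. For `y ∈ Y`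
the least such `m` is the first return time of `x`, so the sets `σ^{n(k)}(Y_k)` cover `Y`. They
are disjoint because a point of `σ^a(Y_a) ∩ σ^b(Y_b)` with `a < b` would give a point of `Y_b`
returning to `Y` at time `b - a < b`.
-/

/-- `firstReturnTimeIs σ Y x n` says that `n ≥ 1` is the smallest positive integer
with `σ^n x ∈ Y`, i.e. the first return time of `x` to `Y` equals `n`. -/
def firstReturnTimeIs {X : Type*} (σ : X → X) (Y : Set X) (x : X) (n : ℕ) : Prop :=
  1 ≤ n ∧ σ^[n] x ∈ Y ∧ ∀ m : ℕ, 1 ≤ m → m < n → σ^[m] x ∉ Y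

open Function Set

namespace firstReturnTimeIs

variable {X : Type*} {f : X → X} {Y : Set X} {x x' : X} {a b : ℕ}

theorem unique (ha : firstReturnTimeIs f Y x a) (hb : firstReturnTimeIs f Y x b) : a = b := by
  by_contra hne
  rcases Nat.lt_or_gt_of_ne hne with hab | hba
  · exact hb.2.2 a ha.1 hab ha.2.1
  · exact ha.2.2 b hb.1 hba hb.2.1

theorem iterate_ne_of_lt (hf : Injective f) (hx : x ∈ Y) (ha : firstReturnTimeIs f Y x a)
    (hb : firstReturnTimeIs f Y x' b) (hab : a < b) : f^[a] x ≠ f^[b] x' := by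
  intro h
  have hsplit : f^[b] x' = f^[a] (f^[b - a] x') := by
    rw [← iterate_add_apply, Nat.add_sub_cancel' hab.le]
  rw [hsplit] at h
  have hx' : f^[b - a] x' = x := ((hf.iterate a) h).symm
  exact hb.2.2 (b - a) (by omega) (by have := ha.1; omega) (hx' ▸ hx)

theorem eq_of_iterate_eq (hf : Injective f) (hx : x ∈ Y) (hx' : x' ∈ Y)
    (ha : firstReturnTimeIs f Y x a) (hb : firstReturnTimeIs f Y x' b)
    (h : f^[a] x = f^[b] x') : a = b := by
  rcases lt_trichotomy a b with hab | rfl | hba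
  · exact (iterate_ne_of_lt hf hx ha hb hab h).elim
  · rfl
  · exact (iterate_ne_of_lt hf hx' hb ha hba h.symm).elim

end firstReturnTimeIs

theorem exists_firstReturnTimeIs_iterate_eq {X : Type*} {f : X → X} {Y : Set X} {y : X}
    (hy : y ∈ Y) (hreach : ∃ m, y ∈ f^[m + 1] '' Y) :
    ∃ x ∈ Y, ∃ n, firstReturnTimeIs f Y x n ∧ f^[n] x = y := by
  classical
  obtain ⟨x, hxY, hxy⟩ := Nat.find_spec hreach
  refine ⟨x, hxY, Nat.find hreach + 1, ⟨by omega, hxy.symm ▸ hy, fun j hj hjlt hjY => ?_⟩, hxy⟩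
  have hshorter : y ∈ f^[Nat.find hreach - j + 1] '' Y := by
    refine ⟨f^[j] x, hjY, ?_⟩
    rw [← iterate_add_apply, show Nat.find hreach - j + 1 + j = Nat.find hreach + 1 by omega, hxy]
  have := Nat.find_min' hreach hshorter
  omega

section Minimal

variable {X : Type*} [TopologicalSpace X] [CompactSpace X] (σ : X ≃ₜ X)

/-- The points whose forward orbit stays in `K` form a closed invariant set, nonempty when `K` is
because the sets `σ^{-j} K` are nested. -/
theorem eq_empty_or_univ_of_preimage_subset
    (hmin : ∀ Z : Set X, IsClosed Z → ⇑σ '' Z = Z → Z = ∅ ∨ Z = Set.univ)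
    {K : Set X} (hK : IsClosed K) (hσK : σ ⁻¹' K ⊆ K) : K = ∅ ∨ K = univ := by
  set A : ℕ → Set X := fun j => σ^[j] ⁻¹' K
  have hA_closed : ∀ j, IsClosed (A j) := fun j => hK.preimage (σ.continuous.iterate j)
  have hA_succ : ∀ j, A (j + 1) = σ ⁻¹' A j := fun j => by
    simp only [A, iterate_succ, preimage_comp]
  have hA_anti : ∀ j, A (j + 1) ⊆ A j := fun j => by
    simp only [A, iterate_succ', preimage_comp]
    exact preimage_mono hσK
  have hL_inv : ⇑σ '' ⋂ j, A j = ⋂ j, A j := by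
    have hpre : σ ⁻¹' ⋂ j, A j = ⋂ j, A j := by
      rw [preimage_iInter, ← iInter_congr hA_succ]
      exact (iInter_mono hA_anti).antisymm (subset_iInter fun j => iInter_subset A (j + 1))
    rw [← hpre, image_preimage_eq _ σ.surjective, hpre]
  rcases hmin _ (isClosed_iInter hA_closed) hL_inv with hL | hL
  · refine .inl (eq_empty_of_forall_notMem fun k hk => ?_)
    have hA_ne : ∀ j, (A j).Nonempty := fun j =>
      (σ.surjective.iterate j).nonempty_preimage.mpr ⟨k, hk⟩
    exact (IsCompact.nonempty_iInter_of_sequence_nonempty_isCompact_isClosed A hA_anti hA_ne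
      (hA_closed 0).isCompact hA_closed).ne_empty hL
  · exact .inr (eq_univ_of_univ_subset (hL ▸ iInter_subset A 0))

theorem iUnion_image_iterate_succ_eq_univ
    (hmin : ∀ Z : Set X, IsClosed Z → ⇑σ '' Z = Z → Z = ∅ ∨ Z = Set.univ)
    {Y : Set X} (hY : IsOpen Y) (hYne : Y.Nonempty) :
    ⋃ m, σ^[m + 1] '' Y = univ := by
  have hopen : ∀ m, IsOpenMap (σ^[m]) := fun m => by
    induction m with
    | zero => exact IsOpenMap.id
    | succ m ih => exact ih.comp σ.isOpenMap
  have hK_closed : IsClosed (⋃ m, σ^[m + 1] '' Y)ᶜ :=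
    (isOpen_iUnion fun m => hopen (m + 1) Y hY).isClosed_compl
  have hσK : σ ⁻¹' (⋃ m, σ^[m + 1] '' Y)ᶜ ⊆ (⋃ m, σ^[m + 1] '' Y)ᶜ := by
    rw [preimage_compl, compl_subset_compl]
    rintro _ ⟨_, ⟨m, rfl⟩, x, hx, rfl⟩
    exact mem_iUnion.mpr ⟨m + 1, x, hx, iterate_succ_apply' σ (m + 1) x⟩
  rcases eq_empty_or_univ_of_preimage_subset σ hmin hK_closed hσK with hK | hK
  · exact compl_empty_iff.mp hK
  · obtain ⟨x, hx⟩ := hYne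
    have : σ x ∈ (⋃ m, σ^[m + 1] '' Y)ᶜ := hK ▸ mem_univ _
    exact (this (mem_iUnion.mpr ⟨0, x, hx, rfl⟩)).elim

end Minimal

theorem rokhlin_tower_partition_of_Y_general
    (X : Type*) [MetricSpace X] [CompactSpace X] (σ : X ≃ₜ X)
    (hmin : ∀ Z : Set X, IsClosed Z → ⇑σ '' Z = Z → Z = ∅ ∨ Z = Set.univ)
    (Y : Set X) (hY : IsClopen Y)
    (l : ℕ) (n : Fin (l + 1) → ℕ) (hmono : StrictMono n)
    (hvals : ∀ x ∈ Y, ∃ k : Fin (l + 1), firstReturnTimeIs (⇑σ) Y x (n k)) :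
    (∀ k k' : Fin (l + 1), k ≠ k' →
      Disjoint ((⇑σ)^[n k] '' {x ∈ Y | firstReturnTimeIs (⇑σ) Y x (n k)})
               ((⇑σ)^[n k'] '' {x ∈ Y | firstReturnTimeIs (⇑σ) Y x (n k')})) ∧
    (⋃ k : Fin (l + 1),
      (⇑σ)^[n k] '' {x ∈ Y | firstReturnTimeIs (⇑σ) Y x (n k)}) = Y := by
  refine ⟨fun k k' hkk' => ?_, ?_⟩
  · rw [disjoint_left]
    rintro _ ⟨x, ⟨hxY, hx⟩, rfl⟩ ⟨x', ⟨hx'Y, hx'⟩, h⟩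
    exact hkk' (hmono.injective (hx.eq_of_iterate_eq σ.injective hxY hx'Y hx' h.symm))
  · refine (iUnion_subset fun k => ?_).antisymm fun y hy => ?_
    · rintro _ ⟨x, ⟨-, hx⟩, rfl⟩
      exact hx.2.1
    · have hreach : ∃ m, y ∈ σ^[m + 1] '' Y := mem_iUnion.mp
        (iUnion_image_iterate_succ_eq_univ σ hmin hY.isOpen ⟨y, hy⟩ ▸ mem_univ y)
      obtain ⟨x, hxY, m, hm, rfl⟩ := exists_firstReturnTimeIs_iterate_eq hy hreach
      obtain ⟨k, hk⟩ := hvals x hxY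
      exact mem_iUnion.mpr ⟨k, x, ⟨hxY, hm.unique hk ▸ hm⟩, by rw [hm.unique hk]⟩

/-- With `n 0 < n 1 < ... < n l` the distinct values of the first return
time `λ_Y` on `Y` and `Y_k = {x ∈ Y : λ_Y(x) = n k}`, the sets `σ^{n k}(Y_k)` for
`0 ≤ k ≤ l` are pairwise disjoint and their union is `Y`. -/
theorem rokhlin_tower_partition_of_Y
    (X : Type*) [MetricSpace X] [CompactSpace X] (σ : X ≃ₜ X)
    (hmin : ∀ Z : Set X, IsClosed Z → ⇑σ '' Z = Z → Z = ∅ ∨ Z = Set.univ)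
    (Y : Set X) (hY : IsClopen Y) (hYne : Y.Nonempty)
    (l : ℕ) (n : Fin (l + 1) → ℕ) (hmono : StrictMono n)
    (hvals : ∀ x ∈ Y, ∃ k : Fin (l + 1), firstReturnTimeIs (⇑σ) Y x (n k))
    (hattained : ∀ k : Fin (l + 1), ∃ x ∈ Y, firstReturnTimeIs (⇑σ) Y x (n k)) :
    (∀ k k' : Fin (l + 1), k ≠ k' →
      Disjoint ((⇑σ)^[n k] '' {x ∈ Y | firstReturnTimeIs (⇑σ) Y x (n k)})
               ((⇑σ)^[n k'] '' {x ∈ Y | firstReturnTimeIs (⇑σ) Y x (n k')})) ∧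
    (⋃ k : Fin (l + 1),
      (⇑σ)^[n k] '' {x ∈ Y | firstReturnTimeIs (⇑σ) Y x (n k)}) = Y :=
  rokhlin_tower_partition_of_Y_general X σ hmin Y hY l n hmono hvals
end

section
/- Let X be a Cantor set with metric d, let σ : X → X be a minimal homeomorphism, let y ∈ X, let δ > 0, and let N₀, N be nonnegative integers. Then there exists a clopen neighborhood Y of y such that the sets σ^i(Y), for −N₀ ≤ i ≤ N, are pairwise disjoint and each has diameter less than δ. -/
/-!
A minimal homeomorphism of an infinite compact space has no periodic points, since a finite
orbit would be a proper closed invariant set. Hence the points `σ^i y`, `-N₀ ≤ i ≤ N`, are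
distinct, and a small enough clopen neighbourhood `Y` of `y` (which exists because `X` is
compact and totally disconnected) is carried by each `σ^i` into a small neighbourhood of
`σ^i y`, these neighbourhoods being pairwise disjoint.
-/

open Filter Set Topology

theorem infinite_of_perfectSpace (X : Type*) [TopologicalSpace X] [T1Space X] [PerfectSpace X]
    [Nonempty X] : Infinite X := by
  by_contra hfin
  rw [not_infinite_iff_finite] at hfin
  obtain ⟨x⟩ := ‹Nonempty X›
  exact (PerfectSpace.not_isolated x).ne
    ((isOpen_singleton_iff_punctured_nhds x).1 (isOpen_discrete _))

theorem Homeomorph.toEquiv_zpow {X : Type*} [TopologicalSpace X] (σ : X ≃ₜ X) (n : ℤ) :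
    (σ ^ n).toEquiv = σ.toEquiv ^ n :=
  map_zpow ({ toFun := Homeomorph.toEquiv, map_one' := rfl, map_mul' := fun _ _ => rfl } :
    (X ≃ₜ X) →* Equiv.Perm X) σ n

theorem Homeomorph.continuous_toEquiv_zpow {X : Type*} [TopologicalSpace X] (σ : X ≃ₜ X)
    (n : ℤ) : Continuous (σ.toEquiv ^ n) := by
  rw [← σ.toEquiv_zpow]
  exact (σ ^ n).continuous

namespace Equiv.Perm

variable {α : Type*} (σ : Perm α) (y : α)

theorem image_range_zpow_apply :
    σ '' range (fun m : ℤ => (σ ^ m) y) = range fun m : ℤ => (σ ^ m) y := by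
  rw [← range_comp]
  conv_rhs => rw [← (Equiv.addLeft (1 : ℤ)).surjective.range_comp]
  congr 1
  funext m
  exact (congrArg (· y) (zpow_one_add σ m)).symm

theorem finite_range_zpow_apply_of_zpow_apply_eq {k : ℤ} (hk : k ≠ 0) (hy : (σ ^ k) y = y) :
    (range fun m : ℤ => (σ ^ m) y).Finite := by
  refine ((finite_Ico 0 (k.natAbs : ℤ)).image fun m : ℤ => (σ ^ m) y).subset ?_
  rintro _ ⟨m, rfl⟩
  refine ⟨m % k, ⟨Int.emod_nonneg m hk, Int.emod_lt m hk⟩, ?_⟩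
  dsimp only
  conv_rhs => rw [← Int.emod_add_mul_ediv m k]
  rw [zpow_add, mul_apply, zpow_mul, zpow_apply_eq_self_of_apply_eq_self hy]

theorem injective_zpow_apply_of_minimal [TopologicalSpace α] [T1Space α] [Infinite α]
    (hmin : ∀ Z : Set α, IsClosed Z → σ '' Z = Z → Z = ∅ ∨ Z = univ) :
    Function.Injective fun m : ℤ => (σ ^ m) y := by
  intro i j hij
  by_contra hne
  have hper : (σ ^ (-j + i)) y = y := by
    simp only at hij
    rw [zpow_add, mul_apply, hij, ← mul_apply, ← zpow_add, neg_add_cancel, zpow_zero, one_apply]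
  have hfin := σ.finite_range_zpow_apply_of_zpow_apply_eq y (by omega) hper
  rcases hmin _ hfin.isClosed (σ.image_range_zpow_apply y) with hZ | hZ
  · exact (range_nonempty _).ne_empty hZ
  · exact infinite_univ (hZ ▸ hfin)

end Equiv.Perm

theorem eventually_smallSets_pairwiseDisjoint_image {ι X Y : Type*} [TopologicalSpace X]
    [TopologicalSpace Y] [T2Space Y] {f : ι → X → Y} {s : Set ι} (hs : s.Finite) {x : X}
    (hf : ∀ i ∈ s, ContinuousAt (f i) x) (hinj : s.InjOn fun i => f i x) :
    ∀ᶠ V in (𝓝 x).smallSets, s.PairwiseDisjoint fun i => f i '' V := by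
  obtain ⟨U, hU, hdisj⟩ := (hs.image fun i => f i x).t2_separation
  have hpre : ∀ᶠ V in (𝓝 x).smallSets, ∀ i ∈ s, V ⊆ f i ⁻¹' U (f i x) :=
    (eventually_all_finite hs).2 fun i hi => eventually_smallSets_subset.2 <|
      hf i hi ((hU (f i x)).2.mem_nhds (hU (f i x)).1)
  filter_upwards [hpre] with V hV
  exact (hinj.pairwiseDisjoint_image.1 hdisj).mono_on fun i hi => image_subset_iff.2 (hV i hi)

theorem Metric.eventually_smallSets_diam_lt {X : Type*} [PseudoMetricSpace X] (x : X) {δ : ℝ}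
    (hδ : 0 < δ) : ∀ᶠ V in (𝓝 x).smallSets, Metric.diam V < δ := by
  refine eventually_smallSets.2 ⟨ball x (δ / 3), ball_mem_nhds x (by positivity), fun V hV => ?_⟩
  calc Metric.diam V ≤ Metric.diam (ball x (δ / 3)) := Metric.diam_mono hV isBounded_ball
    _ ≤ 2 * (δ / 3) := Metric.diam_ball (by positivity)
    _ < δ := by linarith

theorem small_clopen_tower_base_general
    (X : Type*) [MetricSpace X] [CompactSpace X]
    [TotallyDisconnectedSpace X] [PerfectSpace X]
    (σ : X ≃ₜ X)
    (hmin : ∀ Z : Set X, IsClosed Z → ⇑σ '' Z = Z → Z = ∅ ∨ Z = Set.univ)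
    (y : X) (δ : ℝ) (hδ : 0 < δ) (N₀ N : ℕ) :
    ∃ Y : Set X, IsClopen Y ∧ y ∈ Y ∧
      (∀ i j : ℤ, -(N₀ : ℤ) ≤ i → i ≤ N → -(N₀ : ℤ) ≤ j → j ≤ N → i ≠ j →
        Disjoint (⇑(σ.toEquiv ^ i) '' Y) (⇑(σ.toEquiv ^ j) '' Y)) ∧
      (∀ i : ℤ, -(N₀ : ℤ) ≤ i → i ≤ N → Metric.diam (⇑(σ.toEquiv ^ i) '' Y) < δ) := by
  have : Nonempty X := ⟨y⟩
  have := infinite_of_perfectSpace X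
  set s := Icc (-(N₀ : ℤ)) N
  have hcont : ∀ i ∈ s, ContinuousAt (σ.toEquiv ^ i) y := fun i _ =>
    (σ.continuous_toEquiv_zpow i).continuousAt
  have hinj := Equiv.Perm.injective_zpow_apply_of_minimal σ.toEquiv y hmin
  have hsmall : ∀ᶠ V in (𝓝 y).smallSets, s.PairwiseDisjoint (fun i => ⇑(σ.toEquiv ^ i) '' V) ∧
      ∀ i ∈ s, Metric.diam (⇑(σ.toEquiv ^ i) '' V) < δ :=
    (eventually_smallSets_pairwiseDisjoint_image (finite_Icc _ _) hcont hinj.injOn).and <|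
      (eventually_all_finite (finite_Icc _ _)).2 fun i hi =>
        (hcont i hi).tendsto.image_smallSets.eventually (Metric.eventually_smallSets_diam_lt _ hδ)
  obtain ⟨Y, ⟨hyY, hY⟩, hdisj, hdiam⟩ := hsmall.exists_mem_basis_of_smallSets (nhds_basis_clopen y)
  exact ⟨Y, hY, hyY, fun i j hi₁ hi₂ hj₁ hj₂ hij => hdisj ⟨hi₁, hi₂⟩ ⟨hj₁, hj₂⟩ hij,
    fun i hi₁ hi₂ => hdiam i ⟨hi₁, hi₂⟩⟩

/-- Let `X` be a Cantor set (nonempty compact metrizable, totally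
disconnected and perfect), `σ : X → X` a minimal homeomorphism, `y ∈ X`, `δ > 0`,
and `N₀, N` nonnegative integers.  Then there is a clopen neighborhood `Y` of `y`
such that the sets `σ^i(Y)` for `-N₀ ≤ i ≤ N` are pairwise disjoint and each has
diameter less than `δ`. -/
theorem small_clopen_tower_base
    (X : Type*) [MetricSpace X] [CompactSpace X] [Nonempty X]
    [TotallyDisconnectedSpace X] [PerfectSpace X]
    (σ : X ≃ₜ X)
    (hmin : ∀ Z : Set X, IsClosed Z → ⇑σ '' Z = Z → Z = ∅ ∨ Z = Set.univ)
    (y : X) (δ : ℝ) (hδ : 0 < δ) (N₀ N : ℕ) :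
    ∃ Y : Set X, IsClopen Y ∧ y ∈ Y ∧
      (∀ i j : ℤ, -(N₀ : ℤ) ≤ i → i ≤ N → -(N₀ : ℤ) ≤ j → j ≤ N → i ≠ j →
        Disjoint (⇑(σ.toEquiv ^ i) '' Y) (⇑(σ.toEquiv ^ j) '' Y)) ∧
      (∀ i : ℤ, -(N₀ : ℤ) ≤ i → i ≤ N → Metric.diam (⇑(σ.toEquiv ^ i) '' Y) < δ) :=
  small_clopen_tower_base_general X σ hmin y δ hδ N₀ N
end

section
/- Let X be an infinite compact metric space, let σ : X → X be a minimal homeomorphism, let y ∈ X, and let U ⊆ X be a nonempty open set such that σ^{-1}(U \ {σ(y)}) ⊆ U and σ(U \ {y}) ⊆ U. Then U = X. -/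
/-!
The complement `C = Uᶜ` is closed, and the two hypotheses make it forward invariant under `σ`
(if `y ∈ U`) or under `σ⁻¹` (if `y ∉ U`). For a minimal homeomorphism of a compact space, a
nonempty closed forward-invariant set `C` is everything: `⋂ n, σⁿ(C)` is a nonempty closed set
with `σ`-image equal to itself, hence all of `X`. So `Uᶜ` is empty.
-/

open Set

namespace Homeomorph

variable {X : Type*} [TopologicalSpace X]

def IsMinimal (σ : X ≃ₜ X) : Prop :=
  ∀ Z : Set X, IsClosed Z → σ '' Z = Z → Z = ∅ ∨ Z = univ

theorem IsMinimal.symm {σ : X ≃ₜ X} (hmin : σ.IsMinimal) : σ.symm.IsMinimal :=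
  fun Z hZ hinv => hmin Z hZ <| by
    rw [← congrArg (σ '' ·) hinv]
    exact σ.toEquiv.image_symm_image Z

theorem IsMinimal.eq_univ_of_image_subset [CompactSpace X] {σ : X ≃ₜ X} (hmin : σ.IsMinimal)
    {C : Set X} (hC : IsClosed C) (hCne : C.Nonempty) (hσC : σ '' C ⊆ C) : C = univ := by
  set t : ℕ → Set X := fun n => (Set.image σ)^[n] C
  have ht_succ (n : ℕ) : t (n + 1) = σ '' t n := Function.iterate_succ_apply' _ _ _
  have ht_anti : Antitone t := antitone_nat_of_succ_le fun n =>
    (Function.iterate_succ_apply _ n C).trans_subset (monotone_image.iterate n hσC)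
  have ht_closed (n : ℕ) : IsClosed (t n) := by
    induction n with
    | zero => exact hC
    | succ n ih => rw [ht_succ]; exact σ.isClosed_image.mpr ih
  have ht_ne (n : ℕ) : (t n).Nonempty := by
    induction n with
    | zero => exact hCne
    | succ n ih => rw [ht_succ]; exact ih.image σ
  have hZne : (⋂ n, t n).Nonempty :=
    IsCompact.nonempty_iInter_of_sequence_nonempty_isCompact_isClosed t
      (fun n => ht_anti n.le_succ) ht_ne (ht_closed 0).isCompact ht_closed
  have hZinv : σ '' ⋂ n, t n = ⋂ n, t n := by
    rw [image_iInter σ.bijective, ← ht_anti.iInter_nat_add 1]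
    exact iInter_congr fun n => (ht_succ n).symm
  obtain hZ | hZ := hmin _ (isClosed_iInter ht_closed) hZinv
  · exact absurd hZ hZne.ne_empty
  · exact univ_subset_iff.mp (hZ ▸ iInter_subset t 0)

end Homeomorph

theorem invariant_up_to_orbit_open_set_is_everything_general
    (X : Type*) [MetricSpace X] [CompactSpace X] (σ : X ≃ₜ X)
    (hmin : ∀ Z : Set X, IsClosed Z → ⇑σ '' Z = Z → Z = ∅ ∨ Z = Set.univ)
    (y : X) (U : Set X) (hUopen : IsOpen U) (hUne : U.Nonempty)
    (h1 : ⇑σ ⁻¹' (U \ {σ y}) ⊆ U)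
    (h2 : ⇑σ '' (U \ {y}) ⊆ U) :
    U = Set.univ := by
  have hmin : σ.IsMinimal := hmin
  by_contra hU
  have hUc : IsClosed Uᶜ := hUopen.isClosed_compl
  have hUcne : Uᶜ.Nonempty := nonempty_compl.mpr hU
  suffices Uᶜ = univ from hUne.ne_empty (compl_univ_iff.mp this)
  by_cases hy : y ∈ U
  · refine hmin.eq_univ_of_image_subset hUc hUcne ?_
    rintro _ ⟨x, hx, rfl⟩ hσx
    exact hx (h1 ⟨hσx, fun h => hx (σ.injective h ▸ hy)⟩)
  · refine hmin.symm.eq_univ_of_image_subset hUc hUcne ?_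
    rintro _ ⟨x, hx, rfl⟩ hσx
    exact hx (by simpa using h2 (mem_image_of_mem σ ⟨hσx, fun h => hy (h ▸ hσx)⟩))

/-- Let `X` be an infinite compact metric space, `σ : X → X` a minimal
homeomorphism, `y ∈ X`, and `U ⊆ X` a nonempty open set with
`σ⁻¹(U \ {σ y}) ⊆ U` and `σ(U \ {y}) ⊆ U`.  Then `U = X`. -/
theorem invariant_up_to_orbit_open_set_is_everything
    (X : Type*) [MetricSpace X] [CompactSpace X] [Infinite X] (σ : X ≃ₜ X)
    (hmin : ∀ Z : Set X, IsClosed Z → ⇑σ '' Z = Z → Z = ∅ ∨ Z = Set.univ)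
    (y : X) (U : Set X) (hUopen : IsOpen U) (hUne : U.Nonempty)
    (h1 : ⇑σ ⁻¹' (U \ {σ y}) ⊆ U)
    (h2 : ⇑σ '' (U \ {y}) ⊆ U) :
    U = Set.univ :=
  invariant_up_to_orbit_open_set_is_everything_general X σ hmin y U hUopen hUne h1 h2
end

section
/- Let X be an infinite compact metric space, let A be a unital simple C*-algebra, and let α be a *-automorphism of C(X,A) such that C(X,A) is α-simple. Then for every positive element f of C(X,A), every finite set f₁, ..., fₙ ∈ C(X,A), every choice of positive integers s₁, ..., sₙ, and every ε > 0, there exists a positive element g ∈ C(X,A) with ‖g‖ = 1 such that ‖g f g‖ ≥ ‖f‖ − ε and ‖g fᵢ α^{sᵢ}(g)‖ ≤ ε for i = 1, ..., n. -/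
/-!
As `A` is simple, the centre of `C(X, A)` is `C(X, ℂ) ⊗ 1`, so `α` restricts to a
*-endomorphism of `C(X, ℂ)`, which by Gelfand duality is composition with a continuous map
`σ : X → X`; moreover `(α f) y = 0` whenever `f (σ y) = 0`. The functions vanishing on a closed
`σ`-invariant set form a closed `α`-invariant ideal, so `α`-simplicity makes `σ` minimal, and since
`X` is infinite, `σ` has no periodic points. Let `h` be a scalar bump function at a point `x₀` where
`‖f‖` is attained, supported in a ball so small that each `σ^[sᵢ]` moves the ball off itself.
Then `g = h⋆h` satisfies `(g f g)(x₀) = f x₀`, and `g fᵢ α^[sᵢ](g) = 0`.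
-/

open Metric Filter Topology WeakDual WeakDual.CharacterSpace

section SimpleBanachAlgebra

variable {A : Type*} [NormedRing A]

def TwoSidedIdeal.topologicalClosure (I : TwoSidedIdeal A) : TwoSidedIdeal A :=
  .mk' (closure (I : Set A)) (subset_closure I.zero_mem)
    (fun ha hb => map_mem_closure₂ continuous_add ha hb fun _ ha _ hb => I.add_mem ha hb)
    (fun ha => map_mem_closure continuous_neg ha fun _ ha => I.neg_mem ha)
    (fun {x _} hb => map_mem_closure (continuous_const_mul x) hb fun _ => I.mul_mem_left x _)
    (fun {_ y} ha => map_mem_closure (f := (· * y)) (continuous_mul_const y) ha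
      fun _ => I.mul_mem_right _ y)

theorem TwoSidedIdeal.coe_topologicalClosure (I : TwoSidedIdeal A) :
    (I.topologicalClosure : Set A) = closure I := by
  rw [topologicalClosure, coe_mk']

theorem TwoSidedIdeal.le_topologicalClosure (I : TwoSidedIdeal A) : I ≤ I.topologicalClosure :=
  fun _ ha => (I.coe_topologicalClosure ▸ subset_closure ha :)

theorem isSimpleRing_of_isClosed [CompleteSpace A] [Nontrivial A]
    (h : ∀ I : TwoSidedIdeal A, IsClosed (I : Set A) → I = ⊥ ∨ I = ⊤) : IsSimpleRing A := by
  refine .of_eq_bot_or_eq_top fun I => or_iff_not_imp_right.2 fun hI => ?_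
  have hnonunits : (I : Set A) ⊆ nonunits A := fun a ha ⟨u, hu⟩ =>
    hI <| I.one_mem_iff.1 <| by simpa [← hu] using I.mul_mem_left (↑u⁻¹) a ha
  have hclosure : I.topologicalClosure ≠ ⊤ := fun htop =>
    one_notMem_nonunits <| closure_minimal hnonunits nonunits.isClosed <| by
      rw [← I.coe_topologicalClosure, htop]; trivial
  have hbot := (h _ (I.coe_topologicalClosure ▸ isClosed_closure)).resolve_right hclosure
  exact eq_bot_iff.2 (hbot ▸ I.le_topologicalClosure)

theorem Algebra.isCentral_of_isSimpleRing [NormedAlgebra ℂ A] [CompleteSpace A] [Nontrivial A]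
    [IsSimpleRing A] : Algebra.IsCentral ℂ A where
  out z hz := by
    obtain ⟨c, hc⟩ := spectrum.nonempty z
    let := (IsSimpleRing.isField_center A).toField
    let w : Subring.center A := ⟨algebraMap ℂ A c - z, Subring.mem_center_iff.2 fun a => by
      rw [mul_sub, sub_mul, Algebra.commutes, Subalgebra.mem_center_iff.1 hz]⟩
    have hw : w = 0 := by
      by_contra hw
      exact hc ((isUnit_iff_ne_zero.2 hw).map (Subring.center A).subtype)
    exact ⟨c, sub_eq_zero.1 congr(Subtype.val $hw)⟩

end SimpleBanachAlgebra

section VanishingIdeal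

variable {X : Type*} [TopologicalSpace X]
variable {A : Type*} [Ring A] [TopologicalSpace A] [IsTopologicalRing A]

variable (A) in
def vanishingIdeal (F : Set X) : TwoSidedIdeal C(X, A) :=
  .mk' {f | ∀ x ∈ F, f x = 0} (fun _ _ => rfl)
    (fun hf hg x hx => by simp [hf x hx, hg x hx])
    (fun hf x hx => by simp [hf x hx])
    (fun hg x hx => by simp [hg x hx])
    (fun hf x hx => by simp [hf x hx])

theorem mem_vanishingIdeal {F : Set X} {f : C(X, A)} :
    f ∈ vanishingIdeal A F ↔ ∀ x ∈ F, f x = 0 :=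
  TwoSidedIdeal.mem_mk' ..

theorem isClosed_vanishingIdeal [T1Space A] (F : Set X) :
    IsClosed (vanishingIdeal A F : Set C(X, A)) := by
  simp only [vanishingIdeal, TwoSidedIdeal.coe_mk', Set.ofPred_forall]
  exact isClosed_biInter fun x _ => isClosed_singleton.preimage (continuous_eval_const x)

end VanishingIdeal

section Bump

variable {X : Type*} [PseudoMetricSpace X]

noncomputable def bump (x : X) (r : ℝ) : C(X, ℂ) :=
  ⟨fun z => ((max 0 (1 - dist z x / r) : ℝ) : ℂ), by fun_prop⟩

theorem bump_self (x : X) (r : ℝ) : bump x r x = 1 := by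
  simp [bump]

theorem norm_bump_apply_le_one {r : ℝ} (hr : 0 ≤ r) (x z : X) : ‖bump x r z‖ ≤ 1 := by
  have : 0 ≤ dist z x / r := by positivity
  simp only [bump, ContinuousMap.coe_mk, Complex.norm_real, Real.norm_eq_abs]
  exact abs_le.2
    ⟨by linarith [le_max_left 0 (1 - dist z x / r)], max_le zero_le_one (by linarith)⟩

theorem bump_eq_zero_of_le {r : ℝ} (hr : 0 < r) {x z : X} (h : r ≤ dist z x) :
    bump x r z = 0 := by
  have : 1 ≤ dist z x / r := (one_le_div hr).2 h
  simp [bump, max_eq_left (by linarith : 1 - dist z x / r ≤ 0)]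

theorem norm_bump [CompactSpace X] {r : ℝ} (hr : 0 ≤ r) (x : X) : ‖bump x r‖ = 1 :=
  le_antisymm ((ContinuousMap.norm_le _ zero_le_one).2 (norm_bump_apply_le_one hr x)) <| by
    simpa [bump_self] using (bump x r).norm_coe_le_norm x

theorem bump_mul_bump_comp_eq_zero {τ : X → X} {x : X} {r : ℝ} (hr : 0 < r)
    (h : Disjoint (ball x r) (τ ⁻¹' ball x r)) (z : X) : bump x r z * bump x r (τ z) = 0 := by
  by_cases hz : z ∈ ball x r
  · rw [bump_eq_zero_of_le hr (not_lt.1 (h.notMem_of_mem_left hz)), mul_zero]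
  · rw [bump_eq_zero_of_le hr (not_lt.1 hz), zero_mul]

end Bump

theorem eventually_disjoint_ball_preimage_ball {X : Type*} [MetricSpace X] {τ : X → X} {x : X}
    (hτ : ContinuousAt τ x) (hx : τ x ≠ x) :
    ∀ᶠ r in 𝓝[>] (0 : ℝ), Disjoint (ball x r) (τ ⁻¹' ball x r) := by
  have hd : 0 < dist (τ x) x := dist_pos.2 hx
  obtain ⟨δ, hδ, hτδ⟩ := Metric.continuousAt_iff.1 hτ _ (half_pos hd)
  filter_upwards [Ioo_mem_nhdsGT (lt_min hδ (half_pos hd))] with r hr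
  refine Set.disjoint_left.2 fun z hz hτz => ?_
  have h₁ := hτδ (hz.trans_le (hr.2.le.trans (min_le_left _ _)))
  have h₂ := (mem_ball.1 hτz).trans_le (hr.2.le.trans (min_le_right _ _))
  linarith [dist_triangle_left (τ x) x (τ z)]

section ScalarFunctions

variable (X : Type*) [TopologicalSpace X]
variable (A : Type*) [NormedRing A] [StarRing A] [CStarRing A] [NormedAlgebra ℂ A]
  [StarModule ℂ A]

noncomputable def scalarMap : C(X, ℂ) →⋆ₐ[ℂ] C(X, A) :=
  ContinuousMap.compStarAlgHom X (StarAlgHom.ofId ℂ A) (continuous_algebraMap ℂ A)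

variable {X A}

theorem scalarMap_apply (k : C(X, ℂ)) (x : X) : scalarMap X A k x = algebraMap ℂ A (k x) := rfl

theorem scalarMap_injective [Nontrivial A] : Function.Injective (scalarMap X A) :=
  fun _ _ h => ContinuousMap.ext fun x => (algebraMap ℂ A).injective congr($h x)

theorem commute_scalarMap (k : C(X, ℂ)) (w : C(X, A)) : Commute (scalarMap X A k) w :=
  ContinuousMap.ext fun x => Algebra.commutes (k x) (w x)

theorem norm_scalarMap [CompactSpace X] [Nontrivial A] (k : C(X, ℂ)) :
    ‖scalarMap X A k‖ = ‖k‖ := by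
  simp only [ContinuousMap.norm_eq_iSup_norm, scalarMap_apply, norm_algebraMap']

theorem mem_range_scalarMap_of_forall_commute [Nontrivial A] [Algebra.IsCentral ℂ A]
    {u : C(X, A)} (hu : ∀ w, Commute u w) : u ∈ (scalarMap X A).range := by
  have hcentral (x : X) : u x ∈ Subalgebra.center ℂ A := Subalgebra.mem_center_iff.2 fun a =>
    (congr($(hu (ContinuousMap.const X a)) x)).symm
  choose c hc using fun x => (Algebra.IsCentral.mem_center_iff ℂ).1 (hcentral x)
  have hcont : Continuous c := (algebraMap_isometry ℂ A).isEmbedding.continuous_iff.2 <| by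
    simpa only [Function.comp_def, ← hc] using u.continuous
  exact ⟨⟨c, hcont⟩, ContinuousMap.ext fun x => (hc x).symm⟩

variable [Nontrivial A] [Algebra.IsCentral ℂ A] (α : C(X, A) ≃⋆ₐ[ℂ] C(X, A))

theorem map_scalarMap_mem_range (k : C(X, ℂ)) : α (scalarMap X A k) ∈ (scalarMap X A).range :=
  mem_range_scalarMap_of_forall_commute fun w => by
    simpa using (commute_scalarMap k (α.symm w)).map α

noncomputable def centerHom : C(X, ℂ) →⋆ₐ[ℂ] C(X, ℂ) :=
  (StarAlgEquiv.ofInjective _ scalarMap_injective).symm.toStarAlgHom.comp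
    (((α : C(X, A) →⋆ₐ[ℂ] C(X, A)).comp (scalarMap X A)).codRestrict _
      (map_scalarMap_mem_range α))

theorem scalarMap_centerHom (k : C(X, ℂ)) : scalarMap X A (centerHom α k) = α (scalarMap X A k) :=
  congr(Subtype.val $((StarAlgEquiv.ofInjective _ scalarMap_injective).apply_symm_apply
    ⟨_, map_scalarMap_mem_range α k⟩))

variable [CompactSpace X] [T2Space X]

noncomputable def baseMap : C(X, X) :=
  ((homeoEval X ℂ).symm : C(characterSpace ℂ C(X, ℂ), X)).comp
    ((compContinuousMap (centerHom α)).comp (homeoEval X ℂ))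

theorem apply_baseMap (k : C(X, ℂ)) (x : X) : k (baseMap α x) = centerHom α k x :=
  congr($((homeoEval X ℂ).apply_symm_apply
    (compContinuousMap (centerHom α) (homeoEval X ℂ x))) k)

theorem map_scalarMap (k : C(X, ℂ)) :
    α (scalarMap X A k) = scalarMap X A (k.comp (baseMap α)) := by
  rw [← scalarMap_centerHom]
  congr 1
  ext x
  exact (apply_baseMap α k x).symm

theorem iterate_map_scalarMap_apply (m : ℕ) (k : C(X, ℂ)) (x : X) :
    (⇑α)^[m] (scalarMap X A k) x = algebraMap ℂ A (k ((baseMap α)^[m] x)) := by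
  induction m generalizing k with
  | zero => rfl
  | succ m ih =>
    rw [Function.iterate_succ_apply, map_scalarMap, ih, Function.iterate_succ_apply']
    rfl

theorem scalarMap_mul_mul_iterate_eq_zero {k : C(X, ℂ)} {m : ℕ}
    (hk : ∀ z, k z * k ((baseMap α)^[m] z) = 0) (w : C(X, A)) :
    scalarMap X A k * w * (⇑α)^[m] (scalarMap X A k) = 0 := by
  ext z
  rw [ContinuousMap.mul_apply, ContinuousMap.mul_apply, scalarMap_apply,
    iterate_map_scalarMap_apply, mul_assoc, ← Algebra.commutes, ← mul_assoc, ← map_mul, hk,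
    map_zero, zero_mul, ContinuousMap.zero_apply]

end ScalarFunctions

section Dynamics

variable {X : Type*} [MetricSpace X] [CompactSpace X]
variable {A : Type*} [NormedRing A] [StarRing A] [CStarRing A] [NormedAlgebra ℂ A]
  [StarModule ℂ A] [Nontrivial A]

theorem norm_mul_scalarMap_bump_le {f : C(X, A)} {x : X} {r δ : ℝ} (hr : 0 < r) (hδ : 0 ≤ δ)
    (hf : ∀ z, dist z x < r → ‖f z‖ ≤ δ) : ‖f * scalarMap X A (bump x r)‖ ≤ δ := by
  refine (ContinuousMap.norm_le _ hδ).2 fun z => ?_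
  rw [ContinuousMap.mul_apply, scalarMap_apply]
  by_cases hz : dist z x < r
  · calc ‖f z * algebraMap ℂ A (bump x r z)‖ ≤ δ * 1 := by
          refine (norm_mul_le _ _).trans (mul_le_mul (hf z hz) ?_ (norm_nonneg _) hδ)
          rw [norm_algebraMap']
          exact norm_bump_apply_le_one hr.le x z
      _ = δ := mul_one δ
  · simpa [bump_eq_zero_of_le hr (not_lt.1 hz)] using hδ

variable [CompleteSpace A] [Algebra.IsCentral ℂ A] (α : C(X, A) ≃⋆ₐ[ℂ] C(X, A))

theorem map_apply_eq_zero_of_apply_baseMap {f : C(X, A)} {y : X} (hf : f (baseMap α y) = 0) : α f y = 0 := by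
  let : CStarAlgebra A := {}
  refine norm_le_zero_iff.1 (le_of_forall_pos_le_add fun δ hδ => ?_)
  obtain ⟨r, hr, hball⟩ := Metric.continuousAt_iff.1 f.continuous.continuousAt δ hδ
  have hsmall : ∀ z, dist z (baseMap α y) < r → ‖f z‖ ≤ δ := fun z hz => by
    simpa [hf] using (hball hz).le
  have hloc : α f y = α (f * scalarMap X A (bump (baseMap α y) r)) y := by
    rw [map_mul, map_scalarMap, ContinuousMap.mul_apply, scalarMap_apply,
      ContinuousMap.comp_apply, bump_self, map_one, mul_one]
  calc ‖α f y‖ ≤ ‖α (f * scalarMap X A (bump (baseMap α y) r))‖ :=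
        hloc ▸ ContinuousMap.norm_coe_le_norm _ y
    _ ≤ ‖f * scalarMap X A (bump (baseMap α y) r)‖ := NonUnitalStarAlgHom.norm_apply_le α _
    _ ≤ 0 + δ := (zero_add δ).symm ▸ norm_mul_scalarMap_bump_le hr hδ.le hsmall

variable {α}

theorem eq_univ_of_mapsTo_baseMap
    (hα : ∀ I : TwoSidedIdeal C(X, A), IsClosed (I : Set C(X, A)) →
      (∀ f ∈ I, α f ∈ I) → I = ⊥ ∨ I = ⊤)
    {F : Set X} (hF : IsClosed F) (hFne : F.Nonempty) (hmaps : Set.MapsTo (baseMap α) F F) :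
    F = Set.univ := by
  have hinv : ∀ f ∈ vanishingIdeal A F, α f ∈ vanishingIdeal A F := fun f hf =>
    mem_vanishingIdeal.2 fun x hx => map_apply_eq_zero_of_apply_baseMap α (mem_vanishingIdeal.1 hf _ (hmaps hx))
  rcases hα _ (isClosed_vanishingIdeal F) hinv with hbot | htop
  · refine Set.eq_univ_of_forall fun p => by_contra fun hp => ?_
    have hr : 0 < infDist p F := (hF.notMem_iff_infDist_pos hFne).1 hp
    have hmem : scalarMap X A (bump p (infDist p F)) ∈ vanishingIdeal A F :=
      mem_vanishingIdeal.2 fun x hx => by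
        rw [scalarMap_apply, bump_eq_zero_of_le hr (dist_comm x p ▸ infDist_le_dist_of_mem hx),
          map_zero]
    rw [hbot, TwoSidedIdeal.mem_bot] at hmem
    simpa [scalarMap_apply, bump_self] using congr($hmem p)
  · obtain ⟨x, hx⟩ := hFne
    have hone : (1 : C(X, A)) ∈ vanishingIdeal A F := htop ▸ TwoSidedIdeal.mem_top _
    simpa using mem_vanishingIdeal.1 hone x hx

theorem not_isPeriodicPt_baseMap [Infinite X]
    (hα : ∀ I : TwoSidedIdeal C(X, A), IsClosed (I : Set C(X, A)) →
      (∀ f ∈ I, α f ∈ I) → I = ⊥ ∨ I = ⊤)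
    {m : ℕ} (hm : 0 < m) (x : X) : ¬ Function.IsPeriodicPt (baseMap α) m x := by
  intro hper
  set orbit := Set.range fun n => (baseMap α)^[n] x
  have hfin : orbit.Finite :=
    ((Set.finite_lt_nat m).image fun n => (baseMap α)^[n] x).subset <| Set.range_subset_iff.2
      fun n => ⟨n % m, Nat.mod_lt n hm, hper.iterate_mod_apply n⟩
  have hmaps : Set.MapsTo (baseMap α) orbit orbit := by
    rintro _ ⟨n, rfl⟩
    exact ⟨n + 1, Function.iterate_succ_apply' _ n x⟩
  exact Set.infinite_univ (eq_univ_of_mapsTo_baseMap hα hfin.isClosed ⟨x, 0, rfl⟩ hmaps ▸ hfin)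

end Dynamics

theorem kishimoto_type_estimate_general
    (X : Type*) [MetricSpace X] [CompactSpace X] [Infinite X]
    (A : Type*) [NormedRing A] [StarRing A] [CStarRing A] [NormedAlgebra ℂ A]
    [CompleteSpace A] [StarModule ℂ A] [Nontrivial A]
    (hA : ∀ I : TwoSidedIdeal A, IsClosed (I : Set A) → I = ⊥ ∨ I = ⊤)
    (α : C(X, A) ≃⋆ₐ[ℂ] C(X, A))
    (hαsimple : ∀ I : TwoSidedIdeal C(X, A), IsClosed (I : Set C(X, A)) →
      (∀ f ∈ I, α f ∈ I) → I = ⊥ ∨ I = ⊤)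
    (f : C(X, A))
    (n : ℕ) (fv : Fin n → C(X, A)) (s : Fin n → ℕ) (hs : ∀ i, 1 ≤ s i)
    (ε : ℝ) (hε : 0 < ε) :
    ∃ g : C(X, A), (∃ h : C(X, A), g = star h * h) ∧ ‖g‖ = 1 ∧
      ‖f‖ - ε ≤ ‖g * f * g‖ ∧
      ∀ i : Fin n, ‖g * fv i * (⇑α)^[s i] g‖ ≤ ε := by
  have := isSimpleRing_of_isClosed hA
  have := Algebra.isCentral_of_isSimpleRing (A := A)
  obtain ⟨x₀, -, hx₀⟩ :=
    isCompact_univ.exists_isMaxOn Set.univ_nonempty (map_continuous f).norm.continuousOn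
  have hmoves (i : Fin n) : (baseMap α)^[s i] x₀ ≠ x₀ :=
    not_isPeriodicPt_baseMap hαsimple (hs i) x₀
  obtain ⟨r, hdisj, hr⟩ := ((eventually_all.2 fun i => eventually_disjoint_ball_preimage_ball
    ((baseMap α).continuous.iterate _).continuousAt (hmoves i)).and self_mem_nhdsWithin).exists
  set b := bump x₀ r
  set h := scalarMap X A b
  refine ⟨star h * h, ⟨h, rfl⟩, ?_, ?_, fun i => ?_⟩
  · rw [CStarRing.norm_star_mul_self, norm_scalarMap, norm_bump hr.le, mul_one]
  · have hx₀h : (star h * h) x₀ = 1 := by simp [h, b, scalarMap_apply, bump_self]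
    calc ‖f‖ - ε ≤ ‖f x₀‖ := by
          linarith [(f.norm_le (norm_nonneg _)).2 fun z => hx₀ (Set.mem_univ z)]
      _ = ‖(star h * h * f * (star h * h)) x₀‖ := by simp [hx₀h]
      _ ≤ _ := ContinuousMap.norm_coe_le_norm _ _
  · have hsupp (z : X) : (star b * b) z * (star b * b) ((baseMap α)^[s i] z) = 0 := by
      simp only [ContinuousMap.mul_apply, ContinuousMap.star_apply]
      linear_combination (star (b z) * star (b ((baseMap α)^[s i] z))) *
        bump_mul_bump_comp_eq_zero hr (hdisj i) z
    rw [← map_star, ← map_mul, scalarMap_mul_mul_iterate_eq_zero α hsupp, norm_zero]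
    exact hε.le

/-- Let `X` be an infinite compact metric space, `A` a unital simple
C*-algebra and `α` a *-automorphism of `C(X,A)` such that `C(X,A)` is `α`-simple.
Then for every positive `f ∈ C(X,A)`, every finite family `f₁, ..., fₙ ∈ C(X,A)`,
positive integers `s₁, ..., sₙ` and `ε > 0`, there exists a positive `g ∈ C(X,A)`
with `‖g‖ = 1`, `‖g f g‖ ≥ ‖f‖ - ε` and `‖g fᵢ α^{sᵢ}(g)‖ ≤ ε` for each `i`.
(Positivity of an element `a` of a C*-algebra is expressed as `a = star h * h`
for some `h`.) -/
theorem kishimoto_type_estimate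
    (X : Type*) [MetricSpace X] [CompactSpace X] [Infinite X]
    (A : Type*) [NormedRing A] [StarRing A] [CStarRing A] [NormedAlgebra ℂ A]
    [CompleteSpace A] [StarModule ℂ A] [Nontrivial A]
    (hA : ∀ I : TwoSidedIdeal A, IsClosed (I : Set A) → I = ⊥ ∨ I = ⊤)
    (α : C(X, A) ≃⋆ₐ[ℂ] C(X, A))
    (hαsimple : ∀ I : TwoSidedIdeal C(X, A), IsClosed (I : Set C(X, A)) →
      (∀ f ∈ I, α f ∈ I) → I = ⊥ ∨ I = ⊤)
    (f : C(X, A)) (hf : ∃ h : C(X, A), f = star h * h)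
    (n : ℕ) (fv : Fin n → C(X, A)) (s : Fin n → ℕ) (hs : ∀ i, 1 ≤ s i)
    (ε : ℝ) (hε : 0 < ε) :
    ∃ g : C(X, A), (∃ h : C(X, A), g = star h * h) ∧ ‖g‖ = 1 ∧
      ‖f‖ - ε ≤ ‖g * f * g‖ ∧
      ∀ i : Fin n, ‖g * fv i * (⇑α)^[s i] g‖ ≤ ε :=
  kishimoto_type_estimate_general X A hA α hαsimple f n fv s hs ε hε
end
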